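/- For the five-dimensional Lie algebra with nonzero structure constants determined by $[e_1,e_4]=-e_1$, $[e_1,e_5]=e_2$, $[e_2,e_3]=e_1$, $[e_2,e_4]=e_2$, $[e_3,e_4]=-2e_3$, $[e_3,e_5]=e_4$, $[e_4,e_5]=-2e_5$, the polynomial $K(f) = f_5 f_1^2 + f_1 f_2 f_4 - f_2^2 f_3$ on the dual space is a Casimir function: it Poisson-commutes with every coordinate function $f_A$ with respect to the Poisson–Lie bracket $\{\phi,\psi\}(f)=C^C_{AB} f_C\, \partial_{f_A}\phi\, \partial_{f_B}\psi$. -/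

import Mathlib

open Finset

/-- The bracket of basis elements `e_A, e_B` of the five-dimensional Lie algebra,
expressed as a vector of coordinates w.r.t. the basis `e_1,…,e_5`
(indices shifted to `0,…,4`): the nonzero brackets are
`[e₁,e₄]=-e₁, [e₁,e₅]=e₂, [e₂,e₃]=e₁, [e₂,e₄]=e₂, [e₃,e₄]=-2e₃,
[e₃,e₅]=e₄, [e₄,e₅]=-2e₅`. -/
def br5 : Fin 5 → Fin 5 → Fin 5 → ℝ :=
  ![![0, 0, 0, ![-1,0,0,0,0], ![0,1,0,0,0]],
    ![0, 0, ![1,0,0,0,0], ![0,1,0,0,0], 0],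
    ![0, ![-1,0,0,0,0], 0, ![0,0,-2,0,0], ![0,0,0,1,0]],
    ![![1,0,0,0,0], ![0,-1,0,0,0], ![0,0,2,0,0], 0, ![0,0,0,0,-2]],
    ![![0,-1,0,0,0], 0, ![0,0,0,-1,0], ![0,0,0,0,2], 0]]

/-- The structure constants `C_{AB}^D = [e_A,e_B]^D` of the five-dimensional
Lie algebra. -/
def C5 (A B D : Fin 5) : ℝ := br5 A B D

/-- The polynomial `K(f) = f₅ f₁² + f₁ f₂ f₄ - f₂² f₃` on the dual space. -/
def K5 (f : Fin 5 → ℝ) : ℝ := f 4 * (f 0)^2 + f 0 * f 1 * f 3 - (f 1)^2 * f 2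

def gradK5 (f : Fin 5 → ℝ) : Fin 5 → ℝ :=
  ![2 * f 0 * f 4 + f 1 * f 3, f 0 * f 3 - 2 * f 1 * f 2, -f 1 ^ 2, f 0 * f 1, f 0 ^ 2]

theorem hasFDerivAt_K5 (f : Fin 5 → ℝ) :
    HasFDerivAt K5
      (∑ B, gradK5 f B • ContinuousLinearMap.proj (R := ℝ) (φ := fun _ : Fin 5 => ℝ) B) f := by
  have hproj (i : Fin 5) := hasFDerivAt_apply (𝕜 := ℝ) i f
  have hK : HasFDerivAt K5 _ f :=
    (((hproj 4).mul ((hproj 0).pow 2)).add (((hproj 0).mul (hproj 1)).mul (hproj 3))).sub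
      (((hproj 1).pow 2).mul (hproj 2))
  refine hK.congr_fderiv (ContinuousLinearMap.ext fun v => ?_)
  simp only [gradK5, Fin.sum_univ_five, Matrix.cons_val_zero, Matrix.cons_val_one,
    Matrix.cons_val, add_apply, sub_apply, smul_apply, smul_eq_mul, Pi.mul_apply,
    ContinuousLinearMap.proj_apply, nsmul_eq_mul]
  ring

theorem fderiv_K5_single (f : Fin 5 → ℝ) (B : Fin 5) :
    fderiv ℝ K5 f (Pi.single B 1) = gradK5 f B := by
  simp [(hasFDerivAt_K5 f).fderiv, Pi.single_apply]

theorem sum_coadjoint_mul_gradK5 (f : Fin 5 → ℝ) (A : Fin 5) :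
    ∑ B, (∑ D, C5 A B D * f D) * gradK5 f B = 0 := by
  fin_cases A <;>
    simp only [C5, br5, gradK5, Fin.sum_univ_five, Fin.zero_eta, Fin.mk_one, Fin.reduceFinMk,
      Matrix.cons_val', Matrix.cons_val_fin_one, Matrix.cons_val, Matrix.cons_val_zero,
      Matrix.cons_val_one, Pi.zero_apply] <;>
    ring

theorem K5_casimir (f : Fin 5 → ℝ) (A : Fin 5) :
    ∑ B, (∑ D, C5 A B D * f D) * fderiv ℝ K5 f (Pi.single B 1) = 0 := by
  simpa only [fderiv_K5_single] using sum_coadjoint_mul_gradK5 f A
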